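/- arXiv:2502.13000 — 7 statements merged into one kernel-verified Lean document; each statement's English description precedes it below -/
import Mathlib

section
/- Let X_1, X_2, …, X_j be mutually independent events in a probability space satisfying Σ_{i=1}^j P(X_i) ≤ 1. Then the probability that at most one of the events X_1, …, X_j occurs is at least 2/e. -/
open MeasureTheory ProbabilityTheory
open scoped ENNReal

section auxLemmas
open Real Set


lemma aux_nonneg_of_deriv {f f' : ℝ → ℝ} (hc : ContinuousOn f (Ici 1))
    (hd : ∀ x ∈ Ioi (1:ℝ), HasDerivAt f (f' x) x)
    (h0 : ∀ x ∈ Ioi (1:ℝ), 0 ≤ f' x) (hf1 : f 1 = 0) {T : ℝ} (hT : 1 ≤ T) : 0 ≤ f T := by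
  have hmono : MonotoneOn f (Ici 1) := by
    apply monotoneOn_of_hasDerivWithinAt_nonneg (convex_Ici 1) hc (f' := f')
    · intro x hx
      rw [interior_Ici] at hx ⊢
      exact (hd x hx).hasDerivWithinAt
    · intro x hx; rw [interior_Ici] at hx; exact h0 x hx
  have := hmono (self_mem_Ici) (show T ∈ Ici (1:ℝ) from hT) hT
  linarith [this]

lemma aux_B {T : ℝ} (hT : 0 < T) : 1 - 1/T ≤ Real.log T := by
  have h := Real.log_le_sub_one_of_pos (show 0 < 1/T by positivity)
  rw [Real.log_div one_ne_zero (ne_of_gt hT), Real.log_one] at h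
  linarith

lemma aux_C {T : ℝ} (hT : 1 ≤ T) : 2*T*Real.log T ≤ T^2 - 1 := by
  have h := aux_nonneg_of_deriv (f := fun x => x^2 - 1 - 2*x*Real.log x)
    (f' := fun x => 2*x - 2*Real.log x - 2) ?_ ?_ ?_ ?_ hT
  · simpa using h
  · fun_prop (disch := intro x hx; simp at hx; positivity)
  · intro x hx
    simp only [mem_Ioi] at hx
    have hx0 : (0:ℝ) < x := by linarith
    have h1 : HasDerivAt (fun x : ℝ => x^2 - 1) (2*x) x := by
      simpa using ((hasDerivAt_pow 2 x).sub_const 1)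
    have h2 : HasDerivAt (fun x : ℝ => 2*x*Real.log x) (2 * Real.log x + 2) x := by
      have := ((hasDerivAt_id x).const_mul (2:ℝ)).fun_mul (Real.hasDerivAt_log (ne_of_gt hx0))
      simpa [mul_inv_cancel_right₀ (ne_of_gt hx0), mul_assoc] using this
    refine (h1.fun_sub h2).congr_deriv (Eq.symm ?_)
    ring
  · intro x hx
    simp only [mem_Ioi] at hx
    have := Real.log_le_sub_one_of_pos (show (0:ℝ) < x by linarith)
    show (0:ℝ) ≤ 2*x - 2*Real.log x - 2
    linarith
  · norm_num

lemma aux_D {T : ℝ} (hT : 1 ≤ T) : 2*(T-1) ≤ (T+1)*Real.log T := by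
  have h := aux_nonneg_of_deriv (f := fun x => (x+1)*Real.log x - 2*(x-1))
    (f' := fun x => Real.log x + (x+1)*x⁻¹ - 2) ?_ ?_ ?_ ?_ hT
  · simpa using h
  · fun_prop (disch := intro x hx; simp at hx; positivity)
  · intro x hx
    simp only [mem_Ioi] at hx
    have hx0 : (0:ℝ) < x := by linarith
    have h2 : HasDerivAt (fun x : ℝ => (x+1)*Real.log x) (Real.log x + (x+1)*x⁻¹) x := by
      have := ((hasDerivAt_id x).add_const (1:ℝ)).fun_mul (Real.hasDerivAt_log (ne_of_gt hx0))
      simpa using this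
    refine (h2.fun_sub (((hasDerivAt_id x).sub_const (1:ℝ)).const_mul (2:ℝ))).congr_deriv (Eq.symm ?_)
    simp
  · intro x hx
    simp only [mem_Ioi] at hx
    have hx0 : (0:ℝ) < x := by linarith
    have hlog := aux_B hx0
    show (0:ℝ) ≤ Real.log x + (x+1)*x⁻¹ - 2
    have hinv : x * x⁻¹ = 1 := mul_inv_cancel₀ (ne_of_gt hx0)
    have h1x : 1/x ≤ 1 := by rw [div_le_one hx0]; linarith
    have : (x+1)*x⁻¹ = 1 + 1/x := by field_simp
    rw [this]
    linarith
  · norm_num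


lemma aux_g {x : ℝ} (hx : 1 ≤ x) :
    0 ≤ Real.log (1+x) - Real.log 2 - Real.log x + (x-1)*(x+1)⁻¹ := by
  have h := aux_nonneg_of_deriv
    (f := fun x => Real.log (1+x) - Real.log 2 - Real.log x + (x-1)*(x+1)⁻¹)
    (f' := fun x => (1+x)⁻¹ - x⁻¹ + 2*((x+1)^2)⁻¹) ?_ ?_ ?_ ?_ hx
  · simpa using h
  · fun_prop (disch := intro x hx; simp at hx; positivity)
  · intro x hx
    simp only [mem_Ioi] at hx
    have hx0 : (0:ℝ) < x := by linarith
    have hx1 : (0:ℝ) < x + 1 := by linarith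
    have h1 : HasDerivAt (fun x : ℝ => Real.log (1+x)) (1+x)⁻¹ x := by
      have := (Real.hasDerivAt_log (ne_of_gt (show (0:ℝ) < 1 + x by linarith))).comp x
        ((hasDerivAt_id x).const_add (1:ℝ))
      simpa [Function.comp_def] using this
    have h2 : HasDerivAt (fun x : ℝ => (x-1)*(x+1)⁻¹)
        ((1*(x+1) - (x-1)*1)/(x+1)^2) x := by
      have := ((hasDerivAt_id x).sub_const (1:ℝ)).fun_div ((hasDerivAt_id x).add_const (1:ℝ))
        (ne_of_gt hx1)
      simpa [div_eq_mul_inv] using this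
    have h3 := ((h1.sub_const (Real.log 2)).fun_sub (Real.hasDerivAt_log (ne_of_gt hx0))).fun_add h2
    refine h3.congr_deriv (Eq.symm ?_)
    field_simp
    ring
  · intro x hx
    simp only [mem_Ioi] at hx
    have hx0 : (0:ℝ) < x := by linarith
    have hx1 : (0:ℝ) < x + 1 := by linarith
    show (0:ℝ) ≤ (1+x)⁻¹ - x⁻¹ + 2*((x+1)^2)⁻¹
    have key : (1+x)⁻¹ - x⁻¹ + 2*((x+1)^2)⁻¹ = (x-1)/(x*(x+1)^2) := by
      field_simp
      ring
    rw [key]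
    apply div_nonneg (by linarith) (by positivity)
  · norm_num

lemma aux_E {T : ℝ} (hT : 1 < T) :
    T * Real.log T ≤ (T-1)*(Real.log (1+T) + 1 - Real.log 2) := by
  have h := aux_nonneg_of_deriv
    (f := fun x => (x-1)*(Real.log (1+x) + 1 - Real.log 2) - x*Real.log x)
    (f' := fun x => Real.log (1+x) - Real.log 2 - Real.log x + (x-1)*(x+1)⁻¹) ?_ ?_ ?_ ?_ hT.le
  · linarith
  · fun_prop (disch := intro x hx; simp at hx; positivity)
  · intro x hx
    simp only [mem_Ioi] at hx
    have hx0 : (0:ℝ) < x := by linarith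
    have hx1 : (0:ℝ) < x + 1 := by linarith
    have h1 : HasDerivAt (fun x : ℝ => Real.log (1+x)) (1+x)⁻¹ x := by
      have := (Real.hasDerivAt_log (ne_of_gt (show (0:ℝ) < 1 + x by linarith))).comp x
        ((hasDerivAt_id x).const_add (1:ℝ))
      simpa [Function.comp_def] using this
    have h2 : HasDerivAt (fun x : ℝ => (x-1)*(Real.log (1+x) + 1 - Real.log 2))
        (1*(Real.log (1+x) + 1 - Real.log 2) + (x-1)*(1+x)⁻¹) x :=
      ((hasDerivAt_id x).sub_const (1:ℝ)).mul ((h1.add_const 1).sub_const (Real.log 2))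
    have h3 : HasDerivAt (fun x : ℝ => x*Real.log x) (1*Real.log x + x*x⁻¹) x :=
      (hasDerivAt_id x).mul (Real.hasDerivAt_log (ne_of_gt hx0))
    refine (h2.fun_sub h3).congr_deriv (Eq.symm ?_)
    rw [mul_inv_cancel₀ (ne_of_gt hx0)]
    show Real.log (1+x) - Real.log 2 - Real.log x + (x-1)*(x+1)⁻¹ = _
    have : (x-1)*(x+1)⁻¹ = (x-1)*(1+x)⁻¹ := by ring_nf
    rw [this]
    ring
  · intro x hx
    exact aux_g (le_of_lt (mem_Ioi.mp hx))
  · norm_num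


set_option maxHeartbeats 1000000 in
lemma aux_H {T : ℝ} (hT : 1 < T) : ∃ l m : ℝ, 0 ≤ m ∧
    l * T + m ≤ Real.log (1+T) + 1 - Real.log 2 ∧
    ∀ p : ℝ, 0 ≤ p → p < 1 → -Real.log (1-p) ≤ l * (p/(1-p)) + m * p := by
  have hT0 : (0:ℝ) < T := by linarith
  have hT0' : T ≠ 0 := ne_of_gt hT0
  have hT1 : T - 1 ≠ 0 := by intro h; apply absurd (sub_eq_zero.mp h).symm (ne_of_lt hT)
  set L := Real.log T with hL
  set m := T*(T*L - T + 1)/(T-1)^2 with hm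
  set l := 1/T - m/T^2 with hl
  have hTL1 : T - 1 ≤ T * L := by
    have h0 := aux_B hT0
    have h2 : T * (1 - 1/T) ≤ T * L := mul_le_mul_of_nonneg_left h0 (le_of_lt hT0)
    calc T - 1 = T * (1 - 1/T) := by field_simp
    _ ≤ T * L := h2
  have hm0 : 0 ≤ m := by
    rw [hm]; apply div_nonneg _ (by positivity)
    have : 0 ≤ T*L - T + 1 := by linarith
    positivity
  have hsq : 0 < (T-1)^2 := by positivity
  have hmid : m*(T-1)^2 = T*(T*L-T+1) := by rw [hm]; field_simp
  have hm2 : 2*m ≤ T := by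
    nlinarith [hmid, mul_le_mul_of_nonneg_left (aux_C hT.le) hT0.le, hsq]
  have hm3 : T ≤ m*(T+1) := by
    nlinarith [hmid, mul_le_mul_of_nonneg_left (aux_D hT.le) hT0.le, hsq]
  have hmpos : 0 < m := by nlinarith
  have hlT2 : l*T^2 = T - m := by rw [hl]; field_simp
  have hl0 : 0 ≤ l := by nlinarith [sq_nonneg T]
  refine ⟨l, m, hm0, ?_, ?_⟩
  · have hid : l*T + m = T*L/(T-1) := by rw [hl, hm]; field_simp; ring
    rw [hid, div_le_iff₀ (by linarith : (0:ℝ) < T - 1)]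
    linarith [aux_E hT]
  · -- the H-function analysis
    set y₂ := l*T/m with hy2
    set H : ℝ → ℝ := fun y => l*y⁻¹ - l + m - m*y + Real.log y with hH
    have hy2_ge : 1/T ≤ y₂ := by
      rw [hy2, div_le_div_iff₀ hT0 hmpos]
      nlinarith
    have hy2_le : y₂ ≤ 1 := by
      rw [hy2, div_le_one hmpos]
      nlinarith
    have hy2_pos : 0 < y₂ := lt_of_lt_of_le (by positivity) hy2_ge
    -- value at the two minima
    have hH1 : H 1 = 0 := by rw [hH]; simp
    have hHT : H (1/T) = 0 := by
      rw [hH]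
      simp only [one_div, inv_inv, Real.log_inv]
      rw [hl, hm]
      field_simp
      ring
    -- derivative
    have hderiv : ∀ y : ℝ, 0 < y → HasDerivAt H ((-m*y^2 + y - l)/y^2) y := by
      intro y hy
      have h1 : HasDerivAt H (l * -(y^2)⁻¹ - m*1 + y⁻¹) y := by
        exact ((((hasDerivAt_inv (ne_of_gt hy)).const_mul l).sub_const l).add_const m |>.sub
          ((hasDerivAt_id y).const_mul m)).add (Real.hasDerivAt_log (ne_of_gt hy))
      convert h1 using 1
      field_simp
      ring
    -- sign of q := -m*y^2 + y - l
    have hq : ∀ y : ℝ, T*(-m*y^2 + y - l) = -((1 - T*y)*(l*T - m*y)) := by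
      intro y
      linear_combination (-y) * hlT2
    have hcont : ContinuousOn H {y : ℝ | 0 < y} := by
      fun_prop (disch := intro x hx; simp at hx; positivity)
    -- three monotonicity intervals
    have hA1 : AntitoneOn H (Ioc 0 (1/T)) := by
      apply antitoneOn_of_hasDerivWithinAt_nonpos (convex_Ioc 0 (1/T))
        (hcont.mono (fun x hx => hx.1)) (f' := fun y => (-m*y^2 + y - l)/y^2)
      · intro x hx
        rw [interior_Ioc] at hx ⊢
        exact (hderiv x hx.1).hasDerivWithinAt
      · intro x hx
        rw [interior_Ioc] at hx
        obtain ⟨hx1, hx2⟩ := hx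
        apply div_nonpos_of_nonpos_of_nonneg _ (sq_nonneg x)
        have hTq := hq x
        have hf1 : 0 < 1 - T*x := by
          have : T*x < T*(1/T) := by apply mul_lt_mul_of_pos_left hx2 hT0
          rw [mul_one_div, div_self hT0'] at this; linarith
        have hf2 : 0 ≤ l*T - m*x := by
          have hxy2 : x ≤ y₂ := le_of_lt (lt_of_lt_of_le hx2 hy2_ge)
          rw [hy2, le_div_iff₀ hmpos] at hxy2
          nlinarith
        nlinarith
    have hA2 : MonotoneOn H (Icc (1/T) y₂) := by
      apply monotoneOn_of_hasDerivWithinAt_nonneg (convex_Icc _ _)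
        (hcont.mono (fun x hx => lt_of_lt_of_le (by positivity) hx.1))
        (f' := fun y => (-m*y^2 + y - l)/y^2)
      · intro x hx
        rw [interior_Icc] at hx ⊢
        have hx0 : 0 < x := lt_trans (by positivity) hx.1
        exact (hderiv x hx0).hasDerivWithinAt
      · intro x hx
        rw [interior_Icc] at hx
        obtain ⟨hx1, hx2⟩ := hx
        have hx0 : 0 < x := lt_trans (by positivity) hx1
        apply div_nonneg _ (sq_nonneg x)
        have hTq := hq x
        have hf1 : 1 - T*x ≤ 0 := by
          have : T*(1/T) < T*x := mul_lt_mul_of_pos_left hx1 hT0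
          rw [mul_one_div, div_self hT0'] at this; linarith
        have hf2 : 0 ≤ l*T - m*x := by
          have hxy2 : x ≤ y₂ := le_of_lt hx2
          rw [hy2, le_div_iff₀ hmpos] at hxy2
          nlinarith
        nlinarith
    have hA3 : AntitoneOn H (Icc y₂ 1) := by
      apply antitoneOn_of_hasDerivWithinAt_nonpos (convex_Icc _ _)
        (hcont.mono (fun x hx => lt_of_lt_of_le hy2_pos hx.1))
        (f' := fun y => (-m*y^2 + y - l)/y^2)
      · intro x hx
        rw [interior_Icc] at hx ⊢
        have hx0 : 0 < x := lt_trans hy2_pos hx.1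
        exact (hderiv x hx0).hasDerivWithinAt
      · intro x hx
        rw [interior_Icc] at hx
        obtain ⟨hx1, hx2⟩ := hx
        have hx0 : 0 < x := lt_trans hy2_pos hx1
        apply div_nonpos_of_nonpos_of_nonneg _ (sq_nonneg x)
        have hTq := hq x
        have hf1 : 1 - T*x ≤ 0 := by
          have h1T : 1/T < x := lt_of_le_of_lt hy2_ge hx1
          have : T*(1/T) < T*x := mul_lt_mul_of_pos_left h1T hT0
          rw [mul_one_div, div_self hT0'] at this; linarith
        have hf2 : l*T - m*x ≤ 0 := by
          have hxy2 : y₂ ≤ x := le_of_lt hx1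
          rw [hy2, div_le_iff₀ hmpos] at hxy2
          nlinarith
        nlinarith
    -- H ≥ 0 on (0,1]
    have hHpos : ∀ y : ℝ, 0 < y → y ≤ 1 → 0 ≤ H y := by
      intro y hy0 hy1
      rcases le_or_gt y (1/T) with hc1 | hc1
      · have := hA1 ⟨hy0, hc1⟩ ⟨by positivity, le_refl _⟩ hc1
        rw [hHT] at this; exact this
      rcases le_or_gt y y₂ with hc2 | hc2
      · have := hA2 ⟨le_refl _, hy2_ge⟩ ⟨hc1.le, hc2⟩ hc1.le
        rw [hHT] at this; exact this
      · have := hA3 ⟨hc2.le, hy1⟩ ⟨hy2_le, le_refl 1⟩ hy1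
        rw [hH1] at this; exact this
    -- conclude pointwise inequality
    intro p hp0 hp1
    have hy0 : 0 < 1 - p := by linarith
    have h := hHpos (1-p) hy0 (by linarith)
    rw [hH] at h
    simp only at h
    have hexp : l*(1-p)⁻¹ - l + m - m*(1-p) + Real.log (1-p)
        = l*(p/(1-p)) + m*p + Real.log (1-p) := by
      field_simp
      ring
    rw [hexp] at h
    linarith


lemma aux_key {j : ℕ} (p : Fin j → ℝ) (h0 : ∀ i, 0 ≤ p i) (h1 : ∀ i, p i ≤ 1)
    (hs : ∑ i, p i ≤ 1) :
    2 / Real.exp 1 ≤ (∏ i, (1 - p i)) +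
      ∑ i, p i * ∏ k ∈ Finset.univ.erase i, (1 - p k) := by
  have he1 : (0:ℝ) < Real.exp 1 := Real.exp_pos 1
  by_cases hone : ∃ i, p i = 1
  · obtain ⟨i, hi⟩ := hone
    have hsplit : p i + ∑ k ∈ Finset.univ.erase i, p k = ∑ k, p k :=
      Finset.add_sum_erase _ _ (Finset.mem_univ i)
    have hrest : ∀ k ∈ Finset.univ.erase i, p k = 0 := by
      rw [← Finset.sum_eq_zero_iff_of_nonneg (fun k _ => h0 k)]
      have hnn : 0 ≤ ∑ k ∈ Finset.univ.erase i, p k :=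
        Finset.sum_nonneg (fun k _ => h0 k)
      linarith
    have hterm : p i * ∏ k ∈ Finset.univ.erase i, (1 - p k) = 1 := by
      rw [hi, one_mul]
      apply Finset.prod_eq_one
      intro k hk
      rw [hrest k hk]; ring
    have hsumge := Finset.single_le_sum
      (f := fun i' => p i' * ∏ k ∈ Finset.univ.erase i', (1 - p k))
      (fun k _ => mul_nonneg (h0 k) (Finset.prod_nonneg (fun k' _ => by linarith [h1 k'])))
      (Finset.mem_univ i)
    rw [hterm] at hsumge
    have hprodnn : 0 ≤ ∏ i, (1 - p i) :=
      Finset.prod_nonneg (fun k _ => by linarith [h1 k])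
    have h2e : 2 / Real.exp 1 ≤ 1 := by
      rw [div_le_one he1]
      linarith [Real.add_one_le_exp 1]
    linarith
  · push_neg at hone
    have hlt : ∀ i, p i < 1 := fun i => lt_of_le_of_ne (h1 i) (hone i)
    set y : Fin j → ℝ := fun i => 1 - p i with hy
    have hy0 : ∀ i, 0 < y i := fun i => by simp only [hy]; simp; linarith [hlt i]
    set t : Fin j → ℝ := fun i => p i / y i with ht
    have ht0 : ∀ i, 0 ≤ t i := fun i => div_nonneg (h0 i) (hy0 i).le
    set T := ∑ i, t i with hT
    have hT0 : 0 ≤ T := Finset.sum_nonneg (fun i _ => ht0 i)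
    set Q := ∏ i, y i with hQ
    have hQ0 : 0 < Q := Finset.prod_pos (fun i _ => hy0 i)
    show 2 / Real.exp 1 ≤ Q + ∑ i, p i * ∏ k ∈ Finset.univ.erase i, y k
    have hterm : ∀ i : Fin j, p i * ∏ k ∈ Finset.univ.erase i, y k = t i * Q := by
      intro i
      have hpe : Q = y i * ∏ k ∈ Finset.univ.erase i, y k :=
        (Finset.mul_prod_erase _ _ (Finset.mem_univ i)).symm
      rw [hpe, ht]
      simp only
      have hne := (hy0 i).ne'
      field_simp
    have hident : Q + ∑ i, p i * ∏ k ∈ Finset.univ.erase i, y k = Q * (1 + T) := by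
      rw [Finset.sum_congr rfl (fun i _ => hterm i), ← Finset.sum_mul, hT]
      ring
    rw [hident]
    have hQexp : Q = Real.exp (∑ i, Real.log (y i)) := by
      rw [hQ, Real.exp_sum]
      exact Finset.prod_congr rfl (fun i _ => (Real.exp_log (hy0 i)).symm)
    have hlogt : ∀ i, -Real.log (y i) ≤ t i := by
      intro i
      rw [← Real.log_inv]
      have h := Real.log_le_sub_one_of_pos (inv_pos.mpr (hy0 i))
      have heq : (y i)⁻¹ - 1 = t i := by
        rw [ht]
        simp only
        have hne := (hy0 i).ne'
        have hyi : y i = 1 - p i := rfl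
        field_simp
        linarith [hyi]
      linarith
    rcases le_or_gt T 1 with hT1 | hT1
    · -- easy case
      have hsumlog : -T ≤ ∑ i, Real.log (y i) := by
        have h := Finset.sum_le_sum (fun i (_ : i ∈ Finset.univ) => hlogt i)
        rw [Finset.sum_neg_distrib] at h
        rw [← hT] at h
        linarith
      have hQT : Real.exp (-T) ≤ Q := by
        rw [hQexp]; exact Real.exp_le_exp.mpr hsumlog
      have hstep : 2 / Real.exp 1 ≤ Real.exp (-T) * (1+T) := by
        rw [div_le_iff₀ he1]
        have hea : Real.exp (-T) * (1+T) * Real.exp 1 = Real.exp (1-T) * (1+T) := by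
          rw [mul_comm, ← mul_assoc, ← Real.exp_add]
          ring_nf
        rw [hea]
        have h2T : 2 - T ≤ Real.exp (1-T) := by linarith [Real.add_one_le_exp (1-T)]
        nlinarith [mul_le_mul_of_nonneg_right h2T (show (0:ℝ) ≤ 1 + T by linarith)]
      calc 2 / Real.exp 1 ≤ Real.exp (-T) * (1+T) := hstep
        _ ≤ Q * (1+T) := mul_le_mul_of_nonneg_right hQT (by linarith)
    · -- hard case
      obtain ⟨l, m, hm0, hlm, hpt⟩ := aux_H hT1
      have hsum_le : ∑ i, -Real.log (y i) ≤ l*T + m := by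
        have h1' : ∀ i, -Real.log (y i) ≤ l * t i + m * p i := by
          intro i
          have := hpt (p i) (h0 i) (hlt i)
          simpa [hy, ht] using this
        calc ∑ i, -Real.log (y i) ≤ ∑ i, (l * t i + m * p i) :=
              Finset.sum_le_sum (fun i _ => h1' i)
          _ = l * T + m * ∑ i, p i := by
              rw [Finset.sum_add_distrib, ← Finset.mul_sum, ← Finset.mul_sum, hT]
          _ ≤ l * T + m := by nlinarith [mul_le_mul_of_nonneg_left hs hm0]
      have hQge : 2 * Real.exp (-1) / (1 + T) ≤ Q := by
        rw [hQexp]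
        have h2 : Real.log 2 - 1 - Real.log (1+T) ≤ ∑ i, Real.log (y i) := by
          rw [Finset.sum_neg_distrib] at hsum_le
          linarith
        calc 2 * Real.exp (-1) / (1 + T)
            = Real.exp (Real.log 2 - 1 - Real.log (1+T)) := by
              rw [Real.exp_sub, Real.exp_sub, Real.exp_log (by norm_num : (0:ℝ) < 2),
                Real.exp_log (by linarith : (0:ℝ) < 1 + T), Real.exp_neg]
              ring
          _ ≤ Real.exp (∑ i, Real.log (y i)) := Real.exp_le_exp.mpr h2
      calc 2 / Real.exp 1 = (2 * Real.exp (-1) / (1+T)) * (1 + T) := by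
            rw [Real.exp_neg]
            field_simp
          _ ≤ Q * (1 + T) := mul_le_mul_of_nonneg_right hQge (by linarith)

end auxLemmas


theorem stmt7 {Ω : Type*} [MeasurableSpace Ω] (μ : Measure Ω) [IsProbabilityMeasure μ]
    (j : ℕ) (X : Fin j → Set Ω) (hmeas : ∀ i, MeasurableSet (X i))
    (hindep : iIndepSet X μ)
    (hsum : ∑ i, μ (X i) ≤ 1) :
    ENNReal.ofReal (2 / Real.exp 1) ≤
      μ {ω | ∀ i i' : Fin j, ω ∈ X i → ω ∈ X i' → i = i'} := by
  classical
  have hind := (ProbabilityTheory.iIndepSet_iff X μ).mp hindep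
  -- the events
  set N : Set Ω := ⋂ i, (X i)ᶜ with hN
  set A : Fin j → Set Ω := fun i => ⋂ k, (if k = i then X k else (X k)ᶜ) with hA
  -- measurability
  have hmN : MeasurableSet N := MeasurableSet.iInter (fun i => (hmeas i).compl)
  have hmA : ∀ i, MeasurableSet (A i) := by
    intro i
    apply MeasurableSet.iInter
    intro k
    by_cases hk : k = i
    · rw [if_pos hk]; exact hmeas k
    · rw [if_neg hk]; exact (hmeas k).compl
  -- generateFrom memberships
  have hgen : ∀ i : Fin j, MeasurableSet[MeasurableSpace.generateFrom {X i}] (X i) :=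
    fun i => MeasurableSpace.measurableSet_generateFrom rfl
  -- measure of N
  have hmuN : μ N = ∏ i, μ ((X i)ᶜ) := by
    have := hind Finset.univ (f := fun i => (X i)ᶜ)
      (fun i _ => (hgen i).compl)
    rw [hN]
    rw [← this]
    congr 1
    simp
  -- measure of A i
  have hmuA : ∀ i, μ (A i) = μ (X i) * ∏ k ∈ Finset.univ.erase i, μ ((X k)ᶜ) := by
    intro i
    have hf : ∀ k : Fin j, k ∈ Finset.univ →
        MeasurableSet[MeasurableSpace.generateFrom {X k}]
          (if k = i then X k else (X k)ᶜ) := by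
      intro k _
      by_cases hk : k = i
      · subst hk; rw [if_pos rfl]; exact hgen k
      · simp only [if_neg hk]; exact (hgen k).compl
    have h2 := hind Finset.univ hf
    have hAeq : A i = ⋂ k ∈ Finset.univ, (if k = i then X k else (X k)ᶜ) := by
      rw [hA]; simp
    rw [hAeq, h2]
    rw [← Finset.mul_prod_erase _ _ (Finset.mem_univ i)]
    rw [if_pos rfl]
    congr 1
    apply Finset.prod_congr rfl
    intro k hk
    rw [if_neg (Finset.ne_of_mem_erase hk)]
  -- disjointness and inclusion
  set E : Set Ω := {ω | ∀ i i' : Fin j, ω ∈ X i → ω ∈ X i' → i = i'} with hE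
  have hNE : N ⊆ E := by
    intro ω hω i i' hi hi'
    exfalso
    exact (Set.mem_iInter.mp hω i) hi
  have hAE : ∀ i, A i ⊆ E := by
    intro i ω hω i1 i2 h1 h2
    have key : ∀ k, ω ∈ X k → k = i := by
      intro k hkX
      by_contra hk
      have := Set.mem_iInter.mp hω k
      rw [if_neg hk] at this
      exact this hkX
    rw [key i1 h1, key i2 h2]
  have hdisjAA : Pairwise (Function.onFun Disjoint A) := by
    intro a b hab
    rw [Function.onFun, Set.disjoint_left]
    intro ω hωa hωb
    have h1 := Set.mem_iInter.mp hωa a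
    rw [if_pos rfl] at h1
    have h2 := Set.mem_iInter.mp hωb a
    rw [if_neg hab] at h2
    exact h2 h1
  have hdisjNA : Disjoint N (⋃ i, A i) := by
    rw [Set.disjoint_left]
    intro ω hωN hωA
    obtain ⟨i, hi⟩ := Set.mem_iUnion.mp hωA
    have h1 := Set.mem_iInter.mp hi i
    rw [if_pos rfl] at h1
    exact (Set.mem_iInter.mp hωN i) h1
  -- lower bound for μ E
  have hsub : N ∪ (⋃ i, A i) ⊆ E := Set.union_subset hNE (Set.iUnion_subset hAE)
  have hmuU : μ (N ∪ ⋃ i, A i) = μ N + ∑ i, μ (A i) := by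
    rw [measure_union hdisjNA (MeasurableSet.iUnion hmA)]
    congr 1
    rw [measure_iUnion hdisjAA hmA, tsum_fintype]
  have hlow : μ N + ∑ i, μ (A i) ≤ μ E := by
    rw [← hmuU]
    exact measure_mono hsub
  refine le_trans ?_ hlow
  -- convert to reals
  set q : Fin j → ℝ := fun i => (μ (X i)).toReal with hq
  have hXlt : ∀ i, μ (X i) ≤ 1 := fun i => prob_le_one
  have hXne : ∀ i, μ (X i) ≠ ⊤ := fun i => (lt_of_le_of_lt (hXlt i) (by norm_num)).ne
  have hcompl : ∀ i, μ ((X i)ᶜ) = 1 - μ (X i) := fun i => prob_compl_eq_one_sub (hmeas i)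
  have hcomplR : ∀ i, (μ ((X i)ᶜ)).toReal = 1 - q i := by
    intro i
    rw [hcompl i, hq]
    rw [ENNReal.toReal_sub_of_le (hXlt i) (by norm_num)]
    simp
  have hq0 : ∀ i, 0 ≤ q i := fun i => ENNReal.toReal_nonneg
  have hq1 : ∀ i, q i ≤ 1 := by
    intro i
    have := ENNReal.toReal_mono (by norm_num : (1:ENNReal) ≠ ⊤) (hXlt i)
    simpa using this
  have hqs : ∑ i, q i ≤ 1 := by
    rw [hq]
    have : (∑ i, μ (X i)).toReal ≤ (1 : ENNReal).toReal :=
      ENNReal.toReal_mono (by norm_num) hsum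
    rw [ENNReal.toReal_sum (fun i _ => hXne i)] at this
    simpa using this
  have hkey := aux_key q hq0 hq1 hqs
  -- compare
  have hNR : μ N = ENNReal.ofReal (∏ i, (1 - q i)) := by
    rw [hmuN, ENNReal.ofReal_prod_of_nonneg (fun i _ => by linarith [hq1 i])]
    apply Finset.prod_congr rfl
    intro i _
    rw [← hcomplR i, ENNReal.ofReal_toReal (measure_ne_top μ _)]
  have hAR : ∀ i, μ (A i) =
      ENNReal.ofReal (q i * ∏ k ∈ Finset.univ.erase i, (1 - q k)) := by
    intro i
    rw [hmuA i, ENNReal.ofReal_mul (hq0 i)]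
    congr 1
    · rw [hq, ENNReal.ofReal_toReal (hXne i)]
    · rw [ENNReal.ofReal_prod_of_nonneg (fun k _ => by linarith [hq1 k])]
      apply Finset.prod_congr rfl
      intro k _
      rw [← hcomplR k, ENNReal.ofReal_toReal (measure_ne_top μ _)]
  rw [hNR]
  rw [Finset.sum_congr rfl (fun i (_ : i ∈ Finset.univ) => hAR i)]
  rw [← ENNReal.ofReal_sum_of_nonneg (fun i _ => mul_nonneg (hq0 i)
    (Finset.prod_nonneg (fun k _ => by linarith [hq1 k])))]
  rw [← ENNReal.ofReal_add (Finset.prod_nonneg (fun k _ => by linarith [hq1 k]))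
    (Finset.sum_nonneg (fun i _ => mul_nonneg (hq0 i)
      (Finset.prod_nonneg (fun k _ => by linarith [hq1 k]))))]
  exact ENNReal.ofReal_le_ofReal hkey
end

section
/- For all real numbers a, b ∈ [0, 2/3], the inequality (1−a)(1−b) + (1/2)·((1−a)·b + a·(1−b)) + (1/3)·a·b ≥ 13/27 holds. -/
theorem stmt8 (a b : ℝ) (ha : a ∈ Set.Icc (0 : ℝ) (2 / 3)) (hb : b ∈ Set.Icc (0 : ℝ) (2 / 3)) :
    (13 : ℝ) / 27 ≤
      (1 - a) * (1 - b) + (1 / 2) * ((1 - a) * b + a * (1 - b)) + (1 / 3) * (a * b) := by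
  have ha' : 0 ≤ 2 / 3 - a := sub_nonneg.2 ha.2
  have hb' : 0 ≤ 2 / 3 - b := sub_nonneg.2 hb.2
  -- The form is bilinear in (a, b) and attains its minimum 13/27 at the corner a = b = 2/3.
  have expand : (1 - a) * (1 - b) + (1 / 2) * ((1 - a) * b + a * (1 - b)) + (1 / 3) * (a * b)
      - 13 / 27 = (2 / 3 - a) * (2 / 3 - b) / 3 + 5 / 18 * ((2 / 3 - a) + (2 / 3 - b)) := by
    ring
  rw [← sub_nonneg, expand]
  exact add_nonneg (div_nonneg (mul_nonneg ha' hb') (by norm_num))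
    (mul_nonneg (by norm_num) (add_nonneg ha' hb'))
end

section
/- Let φ be a CNF formula with clauses C_1, …, C_m over boolean variables x_1, …, x_n in which every clause contains exactly three literals corresponding to three distinct variables and, for every variable x_i, both the positive literal x_i and the negative literal ¬x_i appear in some clause of φ. Construct an edge-colored hypergraph H as follows: there is one color c_j for each clause C_j; for each variable x_i and each ordered pair of clauses (C_{j1}, C_{j2}) such that C_{j1} contains the literal x_i and C_{j2} contains the literal ¬x_i, there is a vertex v^i_{j1,j2}, which is said to be associated with the variable-clause pairs (x_i, C_{j1}) and (x_i, C_{j2}); for each clause C_j and each variable x_i occurring in C_j, there is a hyperedge e^i_j of color c_j consisting of all vertices associated with the pair (x_i, C_j). Then φ has a satisfying boolean assignment if and only if there exists a vertex coloring of H leaving at most 2 hyperedges of each color unsatisfied. -/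
open scoped Classical

/-- The vertex set of the hypergraph constructed from a 3-SAT formula with `m` clauses
`C j : Finset (Fin n × Bool)` over `n` variables: a vertex `v^i_{j₁,j₂}` for each variable
`i` and each ordered pair of clauses `(j₁, j₂)` such that the positive literal of `i`
appears in clause `j₁` and the negative literal of `i` appears in clause `j₂`. -/
abbrev SatVtx (n m : ℕ) (C : Fin m → Finset (Fin n × Bool)) : Type :=
  {p : Fin n × Fin m × Fin m // (p.1, true) ∈ C p.2.1 ∧ (p.1, false) ∈ C p.2.2}

/-- Membership of a vertex in the hyperedge `e^i_j` (of color `c_j`): the vertex is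
associated with the variable-clause pair `(x_i, C_j)`. -/
def memEdge {n m : ℕ} {C : Fin m → Finset (Fin n × Bool)}
    (v : SatVtx n m C) (i : Fin n) (j : Fin m) : Prop :=
  v.1.1 = i ∧ (v.1.2.1 = j ∨ v.1.2.2 = j)

/-! A vertex `v^i_{j₁,j₂}` has only two possible useful colors, `c_{j₁}` and `c_{j₂}`; choosing
`c_{j₁}` means "`x_i` is true" and satisfies the edges `e^i_{j₁}` of the clauses where `x_i`
occurs positively, choosing `c_{j₂}` satisfies those where it occurs negatively. A satisfying
assignment thus satisfies, in each clause, the edge of a true literal. Conversely, at most two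
unsatisfied edges among three leave a satisfied edge `e^i_j` in each clause `C_j`, and the
literal of `x_i` in `C_j` is made true by setting `x_i` true iff some edge `e^i_{j'}` with
`x_i ∈ C_{j'}` is satisfied: the vertex `v^i_{j',j}` cannot have both colors `c_{j'}` and `c_j`,
as no clause contains both `x_i` and `¬x_i`. -/

theorem Finset.eq_of_mk_mem_of_card_image_fst {α β : Type*} [DecidableEq α]
    {s : Finset (α × β)} (hs : (s.image Prod.fst).card = s.card) {a : α} {b b' : β}
    (hb : (a, b) ∈ s) (hb' : (a, b') ∈ s) : b = b' :=
  (Prod.mk.inj (Finset.card_image_iff.mp hs hb hb' rfl)).2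

namespace SatVtx

variable {n m : ℕ} {C : Fin m → Finset (Fin n × Bool)}

theorem not_mem_pos_and_neg (hsize : ∀ j, (C j).card = 3)
    (hdistinct : ∀ j, ((C j).image Prod.fst).card = 3) {i : Fin n} {j : Fin m}
    (hpos : (i, true) ∈ C j) (hneg : (i, false) ∈ C j) : False :=
  Bool.noConfusion <| Finset.eq_of_mk_mem_of_card_image_fst
    ((hdistinct j).trans (hsize j).symm) hpos hneg

def EdgeSatisfied (lam : SatVtx n m C → Fin m) (i : Fin n) (j : Fin m) : Prop :=
  ∀ v : SatVtx n m C, memEdge v i j → lam v = j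

noncomputable def unsatisfiedEdges (lam : SatVtx n m C → Fin m) (j : Fin m) : Finset (Fin n) :=
  Finset.univ.filter fun i =>
    (∃ b, (i, b) ∈ C j) ∧ ¬ (∀ v : SatVtx n m C, memEdge v i j → lam v = j)

theorem mem_unsatisfiedEdges {lam : SatVtx n m C → Fin m} {j : Fin m} {i : Fin n} :
    i ∈ unsatisfiedEdges lam j ↔
      i ∈ (C j).image Prod.fst ∧ ¬ EdgeSatisfied lam i j := by
  simp [unsatisfiedEdges, EdgeSatisfied]

theorem card_unsatisfiedEdges_le_two_of_edgeSatisfied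
    (hdistinct : ∀ j, ((C j).image Prod.fst).card = 3) {lam : SatVtx n m C → Fin m}
    {i : Fin n} {j : Fin m} (hi : i ∈ (C j).image Prod.fst) (hsat : EdgeSatisfied lam i j) :
    (unsatisfiedEdges lam j).card ≤ 2 := by
  have hsub : unsatisfiedEdges lam j ⊆ ((C j).image Prod.fst).erase i := fun i' hi' => by
    obtain ⟨hmem, hunsat⟩ := mem_unsatisfiedEdges.mp hi'
    exact Finset.mem_erase.mpr ⟨by rintro rfl; exact hunsat hsat, hmem⟩
  calc _ ≤ (((C j).image Prod.fst).erase i).card := Finset.card_le_card hsub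
    _ = 2 := by rw [Finset.card_erase_of_mem hi, hdistinct]

theorem exists_edgeSatisfied_of_card_unsatisfiedEdges_le_two
    (hdistinct : ∀ j, ((C j).image Prod.fst).card = 3) {lam : SatVtx n m C → Fin m}
    {j : Fin m} (hlam : (unsatisfiedEdges lam j).card ≤ 2) :
    ∃ i ∈ (C j).image Prod.fst, EdgeSatisfied lam i j := by
  by_contra! h
  have hsub : (C j).image Prod.fst ⊆ unsatisfiedEdges lam j := fun i hi =>
    mem_unsatisfiedEdges.mpr ⟨hi, h i hi⟩
  have := Finset.card_le_card hsub
  rw [hdistinct] at this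
  omega

def coloringOf (φ : Fin n → Bool) (v : SatVtx n m C) : Fin m :=
  cond (φ v.1.1) v.1.2.1 v.1.2.2

theorem edgeSatisfied_coloringOf (hsize : ∀ j, (C j).card = 3)
    (hdistinct : ∀ j, ((C j).image Prod.fst).card = 3) {φ : Fin n → Bool} {i : Fin n}
    {j : Fin m} (hi : (i, φ i) ∈ C j) : EdgeSatisfied (coloringOf (C := C) φ) i j := by
  rintro ⟨⟨i', j₁, j₂⟩, hpos, hneg⟩ ⟨rfl, hj⟩
  dsimp only at hpos hneg hj
  unfold coloringOf
  cases hφ : φ i' with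
  | true =>
    rw [hφ] at hi
    rcases hj with rfl | rfl
    · rfl
    · exact (not_mem_pos_and_neg hsize hdistinct hi hneg).elim
  | false =>
    rw [hφ] at hi
    rcases hj with rfl | rfl
    · exact (not_mem_pos_and_neg hsize hdistinct hpos hi).elim
    · rfl

noncomputable def assignmentOf (lam : SatVtx n m C → Fin m) (i : Fin n) : Bool :=
  decide (∃ j, (i, true) ∈ C j ∧ EdgeSatisfied lam i j)

theorem assignmentOf_eq_of_edgeSatisfied (hsize : ∀ j, (C j).card = 3)
    (hdistinct : ∀ j, ((C j).image Prod.fst).card = 3) {lam : SatVtx n m C → Fin m}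
    {i : Fin n} {j : Fin m} {b : Bool} (hb : (i, b) ∈ C j) (hsat : EdgeSatisfied lam i j) :
    assignmentOf lam i = b := by
  cases b with
  | true => exact decide_eq_true ⟨j, hb, hsat⟩
  | false =>
    refine decide_eq_false fun ⟨j', hj', hsat'⟩ => ?_
    let v : SatVtx n m C := ⟨(i, j', j), hj', hb⟩
    have hj : j' = j := (hsat' v ⟨rfl, Or.inl rfl⟩).symm.trans (hsat v ⟨rfl, Or.inr rfl⟩)
    exact not_mem_pos_and_neg hsize hdistinct (hj ▸ hj') hb

end SatVtx

open SatVtx in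
theorem stmt10_general (n m : ℕ) (C : Fin m → Finset (Fin n × Bool))
    (hsize : ∀ j, (C j).card = 3)
    (hdistinct : ∀ j, ((C j).image Prod.fst).card = 3) :
    (∃ φ : Fin n → Bool, ∀ j : Fin m, ∃ l ∈ C j, φ l.1 = l.2) ↔
    (∃ lam : SatVtx n m C → Fin m, ∀ j : Fin m,
      (Finset.univ.filter (fun i : Fin n =>
        (∃ b, (i, b) ∈ C j) ∧
        ¬ (∀ v : SatVtx n m C, memEdge v i j → lam v = j))).card ≤ 2) := by
  constructor
  · rintro ⟨φ, hφ⟩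
    refine ⟨coloringOf φ, fun j => ?_⟩
    obtain ⟨⟨i, b⟩, hl, rfl : φ i = b⟩ := hφ j
    exact card_unsatisfiedEdges_le_two_of_edgeSatisfied hdistinct
      (Finset.mem_image_of_mem _ hl) (edgeSatisfied_coloringOf hsize hdistinct hl)
  · rintro ⟨lam, hlam⟩
    refine ⟨assignmentOf lam, fun j => ?_⟩
    obtain ⟨i, hi, hsat⟩ := exists_edgeSatisfied_of_card_unsatisfiedEdges_le_two hdistinct (hlam j)
    obtain ⟨⟨i, b⟩, hb, rfl⟩ := Finset.mem_image.mp hi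
    exact ⟨(i, b), hb, assignmentOf_eq_of_edgeSatisfied hsize hdistinct hb hsat⟩

theorem stmt10 (n m : ℕ) (C : Fin m → Finset (Fin n × Bool))
    (hsize : ∀ j, (C j).card = 3)
    (hdistinct : ∀ j, ((C j).image Prod.fst).card = 3)
    (hall : ∀ (i : Fin n) (b : Bool), ∃ j, (i, b) ∈ C j) :
    (∃ φ : Fin n → Bool, ∀ j : Fin m, ∃ l ∈ C j, φ l.1 = l.2) ↔
    (∃ lam : SatVtx n m C → Fin m, ∀ j : Fin m,
      (Finset.univ.filter (fun i : Fin n =>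
        (∃ b, (i, b) ∈ C j) ∧
        ¬ (∀ v : SatVtx n m C, memEdge v i j → lam v = j))).card ≤ 2) :=
  stmt10_general n m C hsize hdistinct
end

section
/- Let G be a bipartite graph with parts A and B and let α_a ≤ α_b be nonnegative integers with β = α_b − α_a. Construct a bipartite graph G' with parts A' and B' as follows: A' consists of A together with β new vertices a_1, …, a_β; B' consists of B together with β·(α_b + 1) new vertices b_{ij} for 1 ≤ i ≤ β and 1 ≤ j ≤ α_b + 1; the edge set of G' consists of all edges of G together with the edges a_i b_{ij} for all 1 ≤ i ≤ β and 1 ≤ j ≤ α_b + 1. Then G has a vertex cover C with |C ∩ A| ≤ α_a and |C ∩ B| ≤ α_b if and only if G' has a vertex cover C' with max(|C' ∩ A'|, |C' ∩ B'|) ≤ α_b. -/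
theorem stmt11 {A B : Type*} [Fintype A] [Fintype B]
    (E : A → B → Prop) (αa αb : ℕ) (hle : αa ≤ αb) :
    (∃ (CA : Finset A) (CB : Finset B),
      (∀ a b, E a b → a ∈ CA ∨ b ∈ CB) ∧ CA.card ≤ αa ∧ CB.card ≤ αb) ↔
    (∃ (CA' : Finset (A ⊕ Fin (αb - αa)))
       (CB' : Finset (B ⊕ Fin (αb - αa) × Fin (αb + 1))),
      (∀ a b, E a b → Sum.inl a ∈ CA' ∨ Sum.inl b ∈ CB') ∧
      (∀ (i : Fin (αb - αa)) (j : Fin (αb + 1)),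
        Sum.inr i ∈ CA' ∨ Sum.inr (i, j) ∈ CB') ∧
      CA'.card ≤ αb ∧ CB'.card ≤ αb) := by
  classical
  constructor
  · rintro ⟨CA, CB, hcov, hCA, hCB⟩
    refine ⟨CA.image Sum.inl ∪ (Finset.univ : Finset (Fin (αb - αa))).image Sum.inr,
      CB.image Sum.inl, ?_, ?_, ?_, ?_⟩
    · intro a b hab
      rcases hcov a b hab with h | h
      · exact Or.inl (Finset.mem_union_left _ (Finset.mem_image_of_mem _ h))
      · exact Or.inr (Finset.mem_image_of_mem _ h)
    · intro i j
      exact Or.inl (Finset.mem_union_right _ (Finset.mem_image_of_mem _ (Finset.mem_univ i)))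
    · calc (CA.image Sum.inl ∪ (Finset.univ : Finset (Fin (αb - αa))).image Sum.inr).card
          ≤ (CA.image Sum.inl).card +
            ((Finset.univ : Finset (Fin (αb - αa))).image Sum.inr).card :=
            Finset.card_union_le _ _
        _ ≤ CA.card + (Finset.univ : Finset (Fin (αb - αa))).card := by
            gcongr <;> exact Finset.card_image_le
        _ ≤ αa + (αb - αa) := by
            gcongr
            simp
        _ = αb := by omega
    · calc (CB.image Sum.inl).card ≤ CB.card := Finset.card_image_le
        _ ≤ αb := hCB
  · rintro ⟨CA', CB', hcov, hgad, hCA', hCB'⟩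
    refine ⟨CA'.preimage Sum.inl (Sum.inl_injective.injOn),
      CB'.preimage Sum.inl (Sum.inl_injective.injOn), ?_, ?_, ?_⟩
    · intro a b hab
      rcases hcov a b hab with h | h
      · exact Or.inl (Finset.mem_preimage.mpr h)
      · exact Or.inr (Finset.mem_preimage.mpr h)
    · -- every inr i is in CA'
      have hall : ∀ i : Fin (αb - αa), Sum.inr i ∈ CA' := by
        intro i
        rcases forall_or_exists_not (fun j : Fin (αb + 1) => Sum.inr (i, j) ∈ CB') with hj | ⟨j, hj⟩
        · exfalso
          have hsub : (Finset.univ : Finset (Fin (αb + 1))).image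
              (fun j => (Sum.inr (i, j) : B ⊕ Fin (αb - αa) × Fin (αb + 1))) ⊆ CB' := by
            intro x hx
            simp only [Finset.mem_image] at hx
            obtain ⟨j, _, rfl⟩ := hx
            exact hj j
          have hcard : αb + 1 ≤ CB'.card := by
            calc αb + 1 = ((Finset.univ : Finset (Fin (αb + 1))).image
                (fun j => (Sum.inr (i, j) : B ⊕ Fin (αb - αa) × Fin (αb + 1)))).card := by
                  rw [Finset.card_image_of_injective]
                  · simp
                  · intro x y hxy
                    simpa using hxy
              _ ≤ CB'.card := Finset.card_le_card hsub
          omega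
        · rcases hgad i j with h | h
          · exact h
          · exact absurd h hj
      have hsub : (CA'.preimage Sum.inl Sum.inl_injective.injOn).image Sum.inl ∪
          (Finset.univ : Finset (Fin (αb - αa))).image Sum.inr ⊆ CA' := by
        intro x hx
        rcases Finset.mem_union.mp hx with h | h
        · simp only [Finset.mem_image, Finset.mem_preimage] at h
          obtain ⟨a, ha, rfl⟩ := h
          exact ha
        · simp only [Finset.mem_image] at h
          obtain ⟨j, _, rfl⟩ := h
          exact hall j
      have hdisj : Disjoint ((CA'.preimage Sum.inl Sum.inl_injective.injOn).image Sum.inl)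
          ((Finset.univ : Finset (Fin (αb - αa))).image Sum.inr) := by
        simp only [Finset.disjoint_left, Finset.mem_image]
        rintro x ⟨a, _, rfl⟩ ⟨j, _, h⟩
        cases h
      have := Finset.card_le_card hsub
      rw [Finset.card_union_of_disjoint hdisj,
        Finset.card_image_of_injective _ Sum.inl_injective,
        Finset.card_image_of_injective _ Sum.inr_injective] at this
      simp only [Finset.card_univ, Fintype.card_fin] at this
      omega
    · calc (CB'.preimage Sum.inl Sum.inl_injective.injOn).card
          ≤ CB'.card :=
            Finset.card_le_card_of_injOn Sum.inl
              (fun a ha => Finset.mem_preimage.mp ha) Sum.inl_injective.injOn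
        _ ≤ αb := hCB'
end

section
/- Let G be a bipartite graph with parts A and B, no isolated vertices, and let b_1, b_2 be nonnegative integers. Construct an edge-colored hypergraph H with two colors c_a and c_b as follows: the vertex set of H is the edge set of G; for each a ∈ A there is a hyperedge e_a = {e ∈ E(G) : a is an endpoint of e} of color c_a, and for each b ∈ B there is a hyperedge e_b = {e ∈ E(G) : b is an endpoint of e} of color c_b. Then G has a vertex cover C with |C ∩ A| ≤ b_1 and |C ∩ B| ≤ b_2 if and only if there exists a vertex coloring of H leaving at most b_1 hyperedges of color c_a unsatisfied and at most b_2 hyperedges of color c_b unsatisfied. -/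
/-!
Colouring an edge `c_a` (`true`) exactly when its `A`-endpoint lies outside a vertex cover leaves
only cover vertices with unsatisfied hyperedges. Conversely, the vertices whose hyperedges a
colouring leaves unsatisfied form a vertex cover: an edge coloured `c_a` spoils the hyperedge of
its `B`-endpoint, an edge coloured `c_b` that of its `A`-endpoint.
-/

open scoped Classical

open Finset

namespace BipartiteHypergraph

variable {A B : Type*} {E : A → B → Prop}

-- `[Fintype B]` makes the `∀ p` below decidable through `Fintype.decidableForallFintype`, as in
-- `stmt12`; with `Classical.propDecidable` instead, the two filters would not unify.
noncomputable def unsatisfiedLeft [Fintype A] [Fintype B]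
    (lam : {p : A × B // E p.1 p.2} → Bool) : Finset A :=
  univ.filter fun a => ¬ ∀ p : {p : A × B // E p.1 p.2}, p.1.1 = a → lam p = true

noncomputable def unsatisfiedRight [Fintype A] [Fintype B]
    (lam : {p : A × B // E p.1 p.2} → Bool) : Finset B :=
  univ.filter fun b => ¬ ∀ p : {p : A × B // E p.1 p.2}, p.1.2 = b → lam p = false

theorem mem_unsatisfiedLeft_or_mem_unsatisfiedRight [Fintype A] [Fintype B]
    (lam : {p : A × B // E p.1 p.2} → Bool) {a : A} {b : B} (hab : E a b) :
    a ∈ unsatisfiedLeft lam ∨ b ∈ unsatisfiedRight lam := by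
  simp only [unsatisfiedLeft, unsatisfiedRight, mem_filter, mem_univ, true_and, not_forall]
  cases h : lam ⟨(a, b), hab⟩
  · exact .inl ⟨⟨(a, b), hab⟩, rfl, by simp [h]⟩
  · exact .inr ⟨⟨(a, b), hab⟩, rfl, by simp [h]⟩

noncomputable def coloringOfCover (CA : Finset A) (p : {p : A × B // E p.1 p.2}) : Bool :=
  decide (p.1.1 ∉ CA)

theorem unsatisfiedLeft_coloringOfCover_subset [Fintype A] [Fintype B] (CA : Finset A) :
    unsatisfiedLeft (coloringOfCover (E := E) CA) ⊆ CA := by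
  intro a ha
  by_contra haC
  simp only [unsatisfiedLeft, mem_filter, mem_univ, true_and] at ha
  exact ha fun p hp => by simp [coloringOfCover, hp, haC]

theorem unsatisfiedRight_coloringOfCover_subset [Fintype A] [Fintype B]
    {CA : Finset A} {CB : Finset B}
    (hcover : ∀ a b, E a b → a ∈ CA ∨ b ∈ CB) :
    unsatisfiedRight (coloringOfCover (E := E) CA) ⊆ CB := by
  intro b hb
  by_contra hbC
  simp only [unsatisfiedRight, mem_filter, mem_univ, true_and] at hb
  refine hb fun p hp => ?_
  have hpA : p.1.1 ∈ CA := (hcover _ _ p.2).resolve_right (hp ▸ hbC)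
  simp [coloringOfCover, hpA]

end BipartiteHypergraph

open BipartiteHypergraph in
theorem stmt12_general {A B : Type*} [Fintype A] [Fintype B]
    (E : A → B → Prop) (b1 b2 : ℕ) :
    (∃ (CA : Finset A) (CB : Finset B),
      (∀ a b, E a b → a ∈ CA ∨ b ∈ CB) ∧ CA.card ≤ b1 ∧ CB.card ≤ b2) ↔
    (∃ lam : {p : A × B // E p.1 p.2} → Bool,
      (Finset.univ.filter (fun a : A =>
        ¬ (∀ p : {p : A × B // E p.1 p.2}, p.1.1 = a → lam p = true))).card ≤ b1 ∧
      (Finset.univ.filter (fun b : B =>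
        ¬ (∀ p : {p : A × B // E p.1 p.2}, p.1.2 = b → lam p = false))).card ≤ b2) := by
  constructor
  · rintro ⟨CA, CB, hcover, hCA, hCB⟩
    exact ⟨coloringOfCover CA,
      (card_le_card (unsatisfiedLeft_coloringOfCover_subset CA)).trans hCA,
      (card_le_card (unsatisfiedRight_coloringOfCover_subset hcover)).trans hCB⟩
  · rintro ⟨lam, hleft, hright⟩
    exact ⟨unsatisfiedLeft lam, unsatisfiedRight lam,
      fun _ _ => mem_unsatisfiedLeft_or_mem_unsatisfiedRight lam, hleft, hright⟩

theorem stmt12 {A B : Type*} [Fintype A] [Fintype B]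
    (E : A → B → Prop) (b1 b2 : ℕ)
    (hA : ∀ a, ∃ b, E a b) (hB : ∀ b, ∃ a, E a b) :
    (∃ (CA : Finset A) (CB : Finset B),
      (∀ a b, E a b → a ∈ CA ∨ b ∈ CB) ∧ CA.card ≤ b1 ∧ CB.card ≤ b2) ↔
    (∃ lam : {p : A × B // E p.1 p.2} → Bool,
      (Finset.univ.filter (fun a : A =>
        ¬ (∀ p : {p : A × B // E p.1 p.2}, p.1.1 = a → lam p = true))).card ≤ b1 ∧
      (Finset.univ.filter (fun b : B =>
        ¬ (∀ p : {p : A × B // E p.1 p.2}, p.1.2 = b → lam p = false))).card ≤ b2) :=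
  stmt12_general E b1 b2
end

section
/- Let H = (V, E, ℓ) be an edge-colored hypergraph with k colors, and let d : V × [k] → [0,1] and γ : E → [0,1] satisfy Σ_{c=1}^k d(v,c) ≥ k − 1 for every v ∈ V and d(v, ℓ(e)) ≤ γ(e) for every e ∈ E and every v ∈ e. Then there exists a vertex coloring λ : V → [k] such that for every color c ∈ [k], the number of hyperedges of color c that are unsatisfied by λ is at most 2·Σ_{e ∈ E_c} γ(e), where E_c = {e ∈ E : ℓ(e) = c}. In particular, for every real p ≥ 1, (Σ_{c=1}^k m̂_c^p)^{1/p} ≤ 2·(Σ_{c=1}^k (Σ_{e ∈ E_c} γ(e))^p)^{1/p}, where m̂_c is the number of hyperedges of color c unsatisfied by λ. -/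
/-! Colour every vertex `v` by a colour `c` minimising `d v c`. Since the deficits `1 - d v c` sum
to at most `1`, any two colours have `d`-values summing to at least `1`, so every colour other than
the chosen one has `d v c ≥ 1/2`. Hence each unsatisfied hyperedge `e` of colour `c` contains a
vertex with `γ e ≥ d v c ≥ 1/2`, and counting these gives the bound `2 · Σ_{e ∈ E_c} γ e`.
The `ℓ^p` bound follows coordinatewise. -/

open scoped Classical

open Finset

theorem one_le_add_of_card_sub_one_le_sum {α : Type*} [Fintype α] (f : α → ℝ)
    (hf : ∀ a, f a ≤ 1) (hsum : (Fintype.card α : ℝ) - 1 ≤ ∑ a, f a) {i j : α} (hij : i ≠ j) :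
    1 ≤ f i + f j := by
  have hdeficit : ∑ a, (1 - f a) ≤ 1 := by
    rw [sum_sub_distrib, sum_const, card_univ, nsmul_one]
    linarith
  have hpair : (1 - f i) + (1 - f j) ≤ ∑ a, (1 - f a) := by
    rw [← sum_pair (f := fun a => 1 - f a) hij]
    exact sum_le_sum_of_subset_of_nonneg (subset_univ _) fun a _ _ => sub_nonneg.mpr (hf a)
  linarith

theorem card_le_two_mul_sum_of_one_half_le {ι : Type*} {s t : Finset ι} (hts : t ⊆ s)
    {γ : ι → ℝ} (hγ : ∀ e ∈ s, 0 ≤ γ e) (ht : ∀ e ∈ t, 1 / 2 ≤ γ e) :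
    (#t : ℝ) ≤ 2 * ∑ e ∈ s, γ e := by
  have hcard : #t • (1 / 2 : ℝ) ≤ ∑ e ∈ t, γ e := card_nsmul_le_sum t γ _ ht
  have hsub : ∑ e ∈ t, γ e ≤ ∑ e ∈ s, γ e :=
    sum_le_sum_of_subset_of_nonneg hts fun e he _ => hγ e he
  rw [nsmul_eq_mul] at hcard
  linarith

theorem rpow_sum_rpow_le_mul {α : Type*} {s : Finset α} {A B : α → ℝ} {c p : ℝ}
    (hp : 0 < p) (hc : 0 ≤ c) (hA : ∀ i, 0 ≤ A i) (hB : ∀ i, 0 ≤ B i)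
    (hAB : ∀ i, A i ≤ c * B i) :
    (∑ i ∈ s, A i ^ p) ^ (1 / p) ≤ c * (∑ i ∈ s, B i ^ p) ^ (1 / p) := by
  have hsum : ∑ i ∈ s, A i ^ p ≤ c ^ p * ∑ i ∈ s, B i ^ p := by
    rw [mul_sum]
    refine sum_le_sum fun i _ => ?_
    rw [← Real.mul_rpow hc (hB i)]
    exact Real.rpow_le_rpow (hA i) (hAB i) hp.le
  calc (∑ i ∈ s, A i ^ p) ^ (1 / p)
      ≤ (c ^ p * ∑ i ∈ s, B i ^ p) ^ (1 / p) :=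
        Real.rpow_le_rpow (sum_nonneg fun i _ => Real.rpow_nonneg (hA i) p) hsum
          (one_div_nonneg.mpr hp.le)
    _ = c * (∑ i ∈ s, B i ^ p) ^ (1 / p) := by
        rw [Real.mul_rpow (Real.rpow_nonneg hc p) (sum_nonneg fun i _ => Real.rpow_nonneg (hB i) p),
          ← Real.rpow_mul hc, mul_one_div_cancel hp.ne', Real.rpow_one]

theorem stmt16 {V ι : Type*} [Fintype V] [Fintype ι] (k : ℕ) (hk : 0 < k)
    (edge : ι → Finset V) (ℓ : ι → Fin k)
    (d : V → Fin k → ℝ) (γ : ι → ℝ)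
    (hd : ∀ v c, d v c ∈ Set.Icc (0 : ℝ) 1)
    (hγ : ∀ e, γ e ∈ Set.Icc (0 : ℝ) 1)
    (hsum : ∀ v, (k : ℝ) - 1 ≤ ∑ c : Fin k, d v c)
    (hle : ∀ e, ∀ v ∈ edge e, d v (ℓ e) ≤ γ e) :
    ∃ lam : V → Fin k,
      (∀ c : Fin k,
        ((Finset.univ.filter (fun e : ι =>
            ℓ e = c ∧ ¬ (∀ v ∈ edge e, lam v = c))).card : ℝ) ≤
          2 * ∑ e ∈ Finset.univ.filter (fun e : ι => ℓ e = c), γ e) ∧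
      (∀ p : ℝ, 1 ≤ p →
        (∑ c : Fin k,
          (((Finset.univ.filter (fun e : ι =>
              ℓ e = c ∧ ¬ (∀ v ∈ edge e, lam v = c))).card : ℝ)) ^ p) ^ (1 / p) ≤
        2 * (∑ c : Fin k,
          (∑ e ∈ Finset.univ.filter (fun e : ι => ℓ e = c), γ e) ^ p) ^ (1 / p)) := by
  have : Nonempty (Fin k) := ⟨⟨0, hk⟩⟩
  choose lam hlam using fun v => Finite.exists_min (d v)
  have half_le_of_ne : ∀ v c, lam v ≠ c → 1 / 2 ≤ d v c := fun v c hne => by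
    have := one_le_add_of_card_sub_one_le_sum (d v) (fun c => (hd v c).2)
      (by simpa using hsum v) hne
    linarith [hlam v c]
  have hcount : ∀ c : Fin k,
      ((univ.filter (fun e : ι => ℓ e = c ∧ ¬ (∀ v ∈ edge e, lam v = c))).card : ℝ) ≤
        2 * ∑ e ∈ univ.filter (fun e : ι => ℓ e = c), γ e := fun c => by
    refine card_le_two_mul_sum_of_one_half_le (monotone_filter_right _ fun _ _ h => h.1)
      (fun e _ => (hγ e).1) fun e he => ?_
    obtain ⟨-, rfl, hunsat⟩ := mem_filter.mp he
    obtain ⟨v, hv, hne⟩ := not_forall₂.mp hunsat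
    exact (half_le_of_ne v _ hne).trans (hle e v hv)
  refine ⟨lam, hcount, fun p hp => rpow_sum_rpow_le_mul (by linarith) zero_le_two
    (fun c => Nat.cast_nonneg _) (fun c => sum_nonneg fun e _ => (hγ e).1) hcount⟩
end

section
/- Let H = (V, E, ℓ) be an edge-colored hypergraph with k colors, and let G be its conflict graph: the vertex set of G is E, partitioned into classes V_c = {e ∈ E : ℓ(e) = c} for c ∈ [k], with an edge between e and f whenever e ∩ f ≠ ∅ and ℓ(e) ≠ ℓ(f). Then the minimum over all vertex colorings λ : V → [k] of max_{c ∈ [k]} (number of hyperedges of color c unsatisfied by λ) equals the minimum over all vertex covers C of G of max_{c ∈ [k]} |C ∩ V_c|. -/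
open scoped Classical

/-!
The hyperedges left unsatisfied by a colouring form a vertex cover of the conflict graph, because
two satisfied hyperedges through a common vertex must have the same colour. Conversely, the
complement of a vertex cover is an independent set of the conflict graph, so all of its hyperedges
can be satisfied at once, and the hyperedges this colouring leaves unsatisfied lie in the cover.
As `max_c |C ∩ V_c|` is monotone in `C`, the two minima coincide.
-/

open Finset SimpleGraph

namespace Hypergraph

variable {V ι κ : Type*}

def Satisfies (edge : ι → Finset V) (ℓ : ι → κ) (lam : V → κ) (e : ι) : Prop :=
  ∀ v ∈ edge e, lam v = ℓ e

noncomputable def unsatisfied [Fintype ι] (edge : ι → Finset V) (ℓ : ι → κ) (lam : V → κ) :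
    Finset ι :=
  univ.filter fun e => ¬ Satisfies edge ℓ lam e

def maxClassCard [Fintype κ] [DecidableEq κ] (ℓ : ι → κ) (C : Finset ι) : ℕ :=
  univ.sup fun c => #(C.filter (ℓ · = c))

def conflictGraph [DecidableEq V] (edge : ι → Finset V) (ℓ : ι → κ) : SimpleGraph ι where
  Adj e f := (edge e ∩ edge f).Nonempty ∧ ℓ e ≠ ℓ f
  symm := ⟨fun e f h => ⟨Finset.inter_comm (edge e) (edge f) ▸ h.1, h.2.symm⟩⟩
  loopless := ⟨fun _ h => h.2 rfl⟩

variable {edge : ι → Finset V} {ℓ : ι → κ}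

@[simp]
lemma mem_unsatisfied [Fintype ι] {lam : V → κ} {e : ι} :
    e ∈ unsatisfied edge ℓ lam ↔ ¬ Satisfies edge ℓ lam e := by
  simp [unsatisfied]

lemma maxClassCard_mono [Fintype κ] [DecidableEq κ] {C D : Finset ι} (h : C ⊆ D) :
    maxClassCard ℓ C ≤ maxClassCard ℓ D :=
  Finset.sup_mono_fun fun _ _ => Finset.card_le_card (Finset.filter_subset_filter _ h)

variable [DecidableEq V]

@[simp]
lemma conflictGraph_adj {e f : ι} :
    (conflictGraph edge ℓ).Adj e f ↔ (edge e ∩ edge f).Nonempty ∧ ℓ e ≠ ℓ f :=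
  Iff.rfl

lemma isVertexCover_conflictGraph_iff {C : Set ι} :
    (conflictGraph edge ℓ).IsVertexCover C ↔
      ∀ e f, (edge e ∩ edge f).Nonempty → ℓ e ≠ ℓ f → e ∈ C ∨ f ∈ C :=
  forall₂_congr fun _ _ => and_imp

lemma isIndepSet_setOf_satisfies (lam : V → κ) :
    (conflictGraph edge ℓ).IsIndepSet {e | Satisfies edge ℓ lam e} := by
  rintro _ he _ hf - hadj
  obtain ⟨⟨v, hv⟩, hℓ⟩ := conflictGraph_adj.mp hadj
  rw [Finset.mem_inter] at hv
  exact hℓ ((he v hv.1).symm.trans (hf v hv.2))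

/-- Colour each vertex by the label of some hyperedge of `S` through it; independence makes
all such labels agree. -/
lemma exists_forall_satisfies_of_isIndepSet [Nonempty κ] {S : Set ι}
    (hS : (conflictGraph edge ℓ).IsIndepSet S) :
    ∃ lam : V → κ, ∀ e ∈ S, Satisfies edge ℓ lam e := by
  refine ⟨fun v => if h : ∃ e ∈ S, v ∈ edge e then ℓ h.choose else Classical.arbitrary κ,
    fun e he v hv => ?_⟩
  have h : ∃ e ∈ S, v ∈ edge e := ⟨e, he, hv⟩
  obtain ⟨hfS, hfv⟩ := h.choose_spec
  simp only [dif_pos h]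
  by_contra hℓ
  exact hS hfS he (fun hfe => hℓ (hfe ▸ rfl))
    (conflictGraph_adj.mpr ⟨⟨v, Finset.mem_inter.mpr ⟨hfv, hv⟩⟩, hℓ⟩)

variable [Fintype ι]

lemma isVertexCover_unsatisfied (lam : V → κ) :
    (conflictGraph edge ℓ).IsVertexCover ↑(unsatisfied edge ℓ lam) := by
  rw [← isIndepSet_compl_iff_isVertexCover]
  convert isIndepSet_setOf_satisfies lam
  ext e
  simp

lemma exists_unsatisfied_subset_of_isVertexCover [Nonempty κ] {C : Finset ι}
    (hC : (conflictGraph edge ℓ).IsVertexCover ↑C) :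
    ∃ lam : V → κ, unsatisfied edge ℓ lam ⊆ C := by
  obtain ⟨lam, hlam⟩ :=
    exists_forall_satisfies_of_isIndepSet (isIndepSet_compl_iff_isVertexCover.mpr hC)
  refine ⟨lam, fun e he => ?_⟩
  by_contra heC
  exact mem_unsatisfied.mp he (hlam e heC)

lemma maxClassCard_unsatisfied [Fintype V] [Fintype κ] [DecidableEq κ] (lam : V → κ) :
    maxClassCard ℓ (unsatisfied edge ℓ lam) =
      univ.sup fun c => #(univ.filter fun e => ℓ e = c ∧ ¬ ∀ v ∈ edge e, lam v = c) := by
  refine Finset.sup_congr rfl fun c _ => congrArg Finset.card ?_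
  ext e
  simp only [Finset.mem_filter, mem_unsatisfied, Satisfies, Finset.mem_univ, true_and]
  constructor
  · rintro ⟨hsat, rfl⟩
    exact ⟨rfl, hsat⟩
  · rintro ⟨rfl, hsat⟩
    exact ⟨hsat, rfl⟩

end Hypergraph

open Hypergraph

theorem stmt19_general {V ι : Type*} [Fintype V] [Fintype ι] [DecidableEq V]
    (k : ℕ) (hk : 0 < k)
    (edge : ι → Finset V) (ℓ : ι → Fin k) :
    sInf {t : ℕ | ∃ lam : V → Fin k,
        t = Finset.univ.sup (fun c : Fin k =>
          (Finset.univ.filter (fun e : ι =>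
            ℓ e = c ∧ ¬ (∀ v ∈ edge e, lam v = c))).card)} =
    sInf {t : ℕ | ∃ C : Finset ι,
        (∀ e f : ι, (edge e ∩ edge f).Nonempty → ℓ e ≠ ℓ f → e ∈ C ∨ f ∈ C) ∧
        t = Finset.univ.sup (fun c : Fin k =>
          (C.filter (fun e : ι => ℓ e = c)).card)} := by
  have : Nonempty (Fin k) := ⟨⟨0, hk⟩⟩
  apply csInf_eq_csInf_of_forall_exists_le
  · rintro _ ⟨lam, rfl⟩
    exact ⟨maxClassCard ℓ (unsatisfied edge ℓ lam),
      ⟨_, isVertexCover_conflictGraph_iff.mp (isVertexCover_unsatisfied lam), rfl⟩,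
      (maxClassCard_unsatisfied lam).le⟩
  · rintro _ ⟨C, hC, rfl⟩
    obtain ⟨lam, hlam⟩ :=
      exists_unsatisfied_subset_of_isVertexCover (isVertexCover_conflictGraph_iff.mpr hC)
    exact ⟨_, ⟨lam, rfl⟩, (maxClassCard_unsatisfied lam).symm.trans_le (maxClassCard_mono hlam)⟩

theorem stmt19 {V ι : Type*} [Fintype V] [Fintype ι] [DecidableEq V]
    (k : ℕ) (hk : 0 < k)
    (edge : ι → Finset V) (hne : ∀ e, (edge e).Nonempty) (ℓ : ι → Fin k) :
    sInf {t : ℕ | ∃ lam : V → Fin k,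
        t = Finset.univ.sup (fun c : Fin k =>
          (Finset.univ.filter (fun e : ι =>
            ℓ e = c ∧ ¬ (∀ v ∈ edge e, lam v = c))).card)} =
    sInf {t : ℕ | ∃ C : Finset ι,
        (∀ e f : ι, (edge e ∩ edge f).Nonempty → ℓ e ≠ ℓ f → e ∈ C ∨ f ∈ C) ∧
        t = Finset.univ.sup (fun c : Fin k =>
          (C.filter (fun e : ι => ℓ e = c)).card)} :=
  stmt19_general k hk edge ℓ
end
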